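/- Let F be a field, let n > 3, and let a : Fin n → Fˣ. For c ∈ F define m(c) = #{i : (a i : F) = c} + #{i : ((a i)⁻¹ : F) = c}. Assume the regularity condition: for all i ≠ j one has a i ≠ a j and (a i)·(a j) ≠ 1. Then there is at most one c ∈ F with m(c) ≥ 2 (almost simple spectrum) if and only if it is NOT the case that ((1:F) ≠ −1 and a i = 1 for some i and a j = −1 for some j). -/

import Mathlib

/-!
An eigenvalue `c` is counted once among the `a i` and once among the `(a i)⁻¹`. Regularity
makes `i ↦ a i` and `i ↦ (a i)⁻¹` injective, so `m c ≥ 2` happens exactly when `c = a i` and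
`c = (a j)⁻¹`; since `a i * a j ≠ 1` for `i ≠ j`, this forces `i = j`, i.e. `c = a i` with
`c² = 1`. Over a field that means `c = ±1`, so the repeated eigenvalues are exactly those
among `1, -1` that occur as some `a i`, and there are two of them only when `1 ≠ -1` and both occur.
-/

open Finset

section Monoid

variable {ι M : Type*} [Fintype ι] [Monoid M]

open scoped Classical in
noncomputable def eigenvalueMultiplicity (a : ι → Mˣ) (c : M) : ℕ :=
  (univ.filter (fun i => (a i : M) = c)).card +
    (univ.filter (fun i => (((a i)⁻¹ : Mˣ) : M) = c)).card

theorem card_filter_eq_le_one_of_injective {α : Type*} {f : ι → α} (hf : Function.Injective f)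
    (c : α) [DecidablePred (fun i => f i = c)] : (univ.filter (fun i => f i = c)).card ≤ 1 :=
  card_le_one.mpr fun _ hi _ hj => hf <| ((mem_filter.mp hi).2).trans (mem_filter.mp hj).2.symm

theorem two_le_eigenvalueMultiplicity_iff {a : ι → Mˣ} (ha : Function.Injective a)
    (hpair : ∀ i j, i ≠ j → a i * a j ≠ 1) (c : M) :
    2 ≤ eigenvalueMultiplicity a c ↔ ∃ i, (a i : M) = c ∧ c * c = 1 := by
  classical
  have hval : Function.Injective (fun i => (a i : M)) := Units.val_injective.comp ha
  have hinv : Function.Injective (fun i => (((a i)⁻¹ : Mˣ) : M)) :=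
    Units.val_injective.comp (inv_injective.comp ha)
  unfold eigenvalueMultiplicity
  have hle := card_filter_eq_le_one_of_injective hval c
  have hle' := card_filter_eq_le_one_of_injective hinv c
  constructor
  · intro h
    obtain ⟨i, hi⟩ := card_pos.mp (show 0 < (univ.filter (fun i => (a i : M) = c)).card by omega)
    obtain ⟨j, hj⟩ := card_pos.mp
      (show 0 < (univ.filter (fun i => (((a i)⁻¹ : Mˣ) : M) = c)).card by omega)
    simp only [mem_filter, mem_univ, true_and] at hi hj
    have hij : i = j := by
      by_contra hij
      refine hpair i j hij (Units.ext ?_)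
      rw [Units.val_mul, hi, ← hj, Units.val_one, Units.inv_mul]
    subst hij
    refine ⟨i, hi, ?_⟩
    nth_rewrite 2 [← hj]
    rw [← hi, Units.mul_inv]
  · rintro ⟨i, hi, hcc⟩
    have hi' : (((a i)⁻¹ : Mˣ) : M) = c := Units.inv_eq_of_mul_eq_one_right (hi ▸ hcc)
    have h1 : 0 < (univ.filter (fun i => (a i : M) = c)).card := card_pos.mpr ⟨i, by simpa⟩
    have h2 : 0 < (univ.filter (fun i => (((a i)⁻¹ : Mˣ) : M) = c)).card :=
      card_pos.mpr ⟨i, by simpa⟩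
    omega

end Monoid

open scoped Classical in
theorem regular_Dn_almost_simple_iff
    {F : Type*} [Field F] {n : ℕ}
    (a : Fin n → Fˣ)
    (m : F → ℕ)
    (hm : ∀ c : F, m c =
      (Finset.univ.filter (fun i => (a i : F) = c)).card +
      (Finset.univ.filter (fun i => (((a i)⁻¹ : Fˣ) : F) = c)).card)
    (hreg : ∀ i j, i ≠ j → a i ≠ a j ∧ a i * a j ≠ 1) :
    (∀ c c' : F, 2 ≤ m c → 2 ≤ m c' → c = c') ↔
      ¬ ((1 : F) ≠ -1 ∧ (∃ i, (a i : F) = 1) ∧ (∃ j, (a j : F) = -1)) := by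
  have hinj : Function.Injective a := fun i j h => by_contra fun hij => (hreg i j hij).1 h
  have hmult : m = eigenvalueMultiplicity a := funext hm
  simp only [hmult, two_le_eigenvalueMultiplicity_iff hinj (fun i j hij => (hreg i j hij).2),
    mul_self_eq_one_iff]
  constructor
  · rintro hsimple ⟨hne, ⟨i, hi⟩, j, hj⟩
    exact hne (hsimple 1 (-1) ⟨i, hi, .inl rfl⟩ ⟨j, hj, .inr rfl⟩)
  · rintro hnot c c' ⟨i, hi, rfl | rfl⟩ ⟨j, hj, rfl | rfl⟩ <;> by_contra hne
    exacts [hne rfl, hnot ⟨hne, ⟨i, hi⟩, j, hj⟩, hnot ⟨Ne.symm hne, ⟨j, hj⟩, i, hi⟩, hne rfl]
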